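/- arXiv:2601.17929 — 4 statements merged into one kernel-verified Lean document; each statement's English description precedes it below -/
import Mathlib

section
/- Let F: ℝ → ℝ satisfy (1/λ²)d(x,y) − ε/λ − ε ≤ d(F(x),F(y)) ≤ λ²d(x,y) + λε + ε for all x,y (with λ ≥ 1, ε ≥ 0). If x₀ > λ²(λ² + λε + 3ε + |F(0)| + 1), then either F([x₀,∞)) ⊆ (0,∞) or F([x₀,∞)) ⊆ (−∞,0). -/
private lemma stmt6_abs (l e : ℝ) (hl : 1 ≤ l) (he : 0 ≤ e) (F : ℝ → ℝ)
    (hF : ∀ x y : ℝ, (1 / l ^ 2) * dist x y - e / l - e ≤ dist (F x) (F y) ∧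
      dist (F x) (F y) ≤ l ^ 2 * dist x y + l * e + e)
    (x₀ : ℝ) (hx₀ : x₀ > l ^ 2 * (l ^ 2 + l * e + 3 * e + |F 0| + 1)) :
    ∀ y : ℝ, x₀ ≤ y → l ^ 2 + l * e + e < |F y| := by
  have hl0 : 0 < l := lt_of_lt_of_le one_pos hl
  have hl2 : 0 < l ^ 2 := by positivity
  have hx0pos : 0 < x₀ := by
    have hb : 0 < l ^ 2 + l * e + 3 * e + |F 0| + 1 := by positivity
    nlinarith [mul_pos hl2 hb]
  intro y hy
  have h1 := (hF y 0).1
  have hdy : dist y 0 = y := by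
    rw [Real.dist_eq, sub_zero, abs_of_pos (lt_of_lt_of_le hx0pos hy)]
  rw [hdy] at h1
  have h2 : dist (F y) (F 0) ≤ |F y| + |F 0| := by
    rw [Real.dist_eq]; exact abs_sub _ _
  have hel : e / l ≤ e := by
    rw [div_le_iff₀ hl0]; nlinarith
  have hu : (1 / l ^ 2) * l ^ 2 = 1 := by field_simp
  have hupos : 0 < 1 / l ^ 2 := by positivity
  have h3 : (1 / l ^ 2) * x₀ > l ^ 2 + l * e + 3 * e + |F 0| + 1 := by
    nlinarith [mul_lt_mul_of_pos_left hx₀ hupos]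
  have hmono : (1 / l ^ 2) * x₀ ≤ (1 / l ^ 2) * y :=
    mul_le_mul_of_nonneg_left hy (le_of_lt hupos)
  linarith

private lemma stmt6_pos (l e : ℝ) (hl : 1 ≤ l) (he : 0 ≤ e) (F : ℝ → ℝ)
    (hF : ∀ x y : ℝ, (1 / l ^ 2) * dist x y - e / l - e ≤ dist (F x) (F y) ∧
      dist (F x) (F y) ≤ l ^ 2 * dist x y + l * e + e)
    (x₀ : ℝ) (hx₀ : x₀ > l ^ 2 * (l ^ 2 + l * e + 3 * e + |F 0| + 1))
    (hpos : 0 < F x₀) : ∀ y : ℝ, x₀ ≤ y → 0 < F y := by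
  have habs := stmt6_abs l e hl he F hF x₀ hx₀
  have hl0 : 0 < l := lt_of_lt_of_le one_pos hl
  have hC : (0:ℝ) < l ^ 2 + l * e + e := by positivity
  have key : ∀ n : ℕ, ∀ y : ℝ, x₀ ≤ y → y ≤ x₀ + n → 0 < F y := by
    intro n
    induction n with
    | zero =>
      intro y h1 h2
      have : y = x₀ := le_antisymm (by simpa using h2) h1
      rwa [this]
    | succ n ih =>
      intro y h1 h2
      push_cast at h2
      by_cases hc : y ≤ x₀ + n
      · exact ih y h1 hc
      · push_neg at hc
        set z := max x₀ (y - 1) with hz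
        have hz1 : x₀ ≤ z := le_max_left _ _
        have hzy : z ≤ y := max_le h1 (by linarith)
        have hz2 : z ≤ x₀ + n := by
          apply max_le
          · have : (0:ℝ) ≤ (n:ℝ) := Nat.cast_nonneg n
            linarith
          · linarith
        have hFz := ih z hz1 hz2
        have hzlo : y - 1 ≤ z := le_max_right _ _
        have hdyz : dist y z ≤ 1 := by
          rw [Real.dist_eq, abs_le]; constructor <;> linarith
        have hub := (hF y z).2
        have habz := habs z hz1
        have haby := habs y h1
        by_contra hcon
        push_neg at hcon
        have hFy : F y < -(l ^ 2 + l * e + e) := by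
          rcases abs_cases (F y) with ⟨h, _⟩ | ⟨h, _⟩ <;> linarith
        have hFz' : l ^ 2 + l * e + e < F z := by
          rcases abs_cases (F z) with ⟨h, _⟩ | ⟨h, _⟩ <;> linarith
        have hd : dist (F y) (F z) = F z - F y := by
          rw [Real.dist_eq, abs_sub_comm, abs_of_pos (by linarith)]
        have hdub : dist (F y) (F z) ≤ l ^ 2 * 1 + l * e + e := by
          calc dist (F y) (F z) ≤ l ^ 2 * dist y z + l * e + e := hub
            _ ≤ l ^ 2 * 1 + l * e + e := by nlinarith [sq_nonneg l]
        rw [hd] at hdub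
        linarith
  intro y hy
  have hn : y ≤ x₀ + (⌈y - x₀⌉₊ : ℝ) := by
    have := Nat.le_ceil (y - x₀)
    linarith
  exact key ⌈y - x₀⌉₊ y hy hn

/-- dichotomy lemma. If `F : ℝ → ℝ` is a `(l², l*e+e)`-quasi-isometric
embedding and `x₀ > l²(l² + l*e + 3e + |F 0| + 1)`, then `F [x₀, ∞)` lies entirely
in `(0, ∞)` or entirely in `(-∞, 0)`. -/
theorem stmt_6 (l e : ℝ) (hl : 1 ≤ l) (he : 0 ≤ e) (F : ℝ → ℝ)
    (hF : ∀ x y : ℝ, (1 / l ^ 2) * dist x y - e / l - e ≤ dist (F x) (F y) ∧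
      dist (F x) (F y) ≤ l ^ 2 * dist x y + l * e + e)
    (x₀ : ℝ) (hx₀ : x₀ > l ^ 2 * (l ^ 2 + l * e + 3 * e + |F 0| + 1)) :
    (∀ y : ℝ, x₀ ≤ y → 0 < F y) ∨ (∀ y : ℝ, x₀ ≤ y → F y < 0) := by
  have hl0 : 0 < l := lt_of_lt_of_le one_pos hl
  have hC : (0:ℝ) < l ^ 2 + l * e + e := by positivity
  have habs := stmt6_abs l e hl he F hF x₀ hx₀ x₀ le_rfl
  rcases lt_or_ge 0 (F x₀) with hpos | hneg
  · exact Or.inl (stmt6_pos l e hl he F hF x₀ hx₀ hpos)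
  · right
    have hne : F x₀ < 0 := by
      rcases abs_cases (F x₀) with ⟨h, _⟩ | ⟨h, _⟩ <;> linarith
    have hF' : ∀ x y : ℝ, (1 / l ^ 2) * dist x y - e / l - e ≤ dist (-F x) (-F y) ∧
        dist (-F x) (-F y) ≤ l ^ 2 * dist x y + l * e + e := by
      intro x y
      have : dist (-F x) (-F y) = dist (F x) (F y) := by
        rw [Real.dist_eq, Real.dist_eq]; ring_nf; rw [abs_sub_comm]; ring_nf
      rw [this]; exact hF x y
    have hx₀' : x₀ > l ^ 2 * (l ^ 2 + l * e + 3 * e + |(fun x => -F x) 0| + 1) := by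
      simpa using hx₀
    have := stmt6_pos l e hl he (fun x => -F x) hF' x₀ hx₀' (by simpa using hne)
    intro y hy
    have := this y hy
    simpa using this
end

section
/- Let F: ℝ → ℝ satisfy the quasi-isometric embedding bounds with constants (λ², λε+ε), and let x₀ > λ²(λ² + λε + 3ε + |F(0)| + 1). If F([x₀,∞)) ⊆ (0,∞), then F((−∞,−x₀]) ⊆ (−∞,0); and if F([x₀,∞)) ⊆ (−∞,0), then F((−∞,−x₀]) ⊆ (0,∞). -/
lemma stmt_8_key (l e : ℝ) (hl : 1 ≤ l) (he : 0 ≤ e) (F : ℝ → ℝ)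
    (hF : ∀ x y : ℝ, (1 / l ^ 2) * |x - y| - e / l - e ≤ |F x - F y| ∧
      |F x - F y| ≤ l ^ 2 * |x - y| + l * e + e)
    (x₀ : ℝ) (hx₀ : x₀ > l ^ 2 * (l ^ 2 + l * e + 3 * e + |F 0| + 1))
    (hpos : ∀ y : ℝ, x₀ ≤ y → 0 < F y) : ∀ y : ℝ, y ≤ -x₀ → F y < 0 := by
  classical
  have hl0 : (0:ℝ) < l := lt_of_lt_of_le one_pos hl
  have hl2 : (1:ℝ) ≤ l ^ 2 := by nlinarith
  have hl2pos : (0:ℝ) < l ^ 2 := by positivity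
  set u := 1 / l ^ 2 with hu_def
  have hupos : 0 < u := by rw [hu_def]; positivity
  have hu : u * l ^ 2 = 1 := by
    rw [hu_def]; field_simp
  have hev : e / l ≤ e := div_le_self he hl
  have hev0 : 0 ≤ e / l := by positivity
  have hBeq : u * (l ^ 2 * (l ^ 2 + l * e + 3 * e + |F 0| + 1))
      = l ^ 2 + l * e + 3 * e + |F 0| + 1 := by
    rw [← mul_assoc, hu, one_mul]
  have hB : l ^ 2 + l * e + 3 * e + |F 0| + 1 < u * x₀ := by
    have := mul_lt_mul_of_pos_left hx₀ hupos
    linarith [hBeq]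
  have hK1 : |F 0| < u * x₀ - e / l - e := by nlinarith [abs_nonneg (F 0)]
  have hK2 : l ^ 2 + l * e + e < u * x₀ - e / l - e := by
    nlinarith [abs_nonneg (F 0)]
  have hx0pos : 0 < x₀ := by
    have h1 : 0 < u * x₀ := by nlinarith [abs_nonneg (F 0)]
    nlinarith [mul_pos h1 hl2pos]
  intro y hy
  by_contra hcon
  push_neg at hcon
  have hy0 : y < 0 := by linarith
  -- band vs 0
  have hband : u * x₀ - e / l - e ≤ |F 0 - F y| := by
    have h := (hF 0 y).1
    rw [zero_sub, abs_neg, abs_of_neg hy0] at h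
    have h2 : u * x₀ ≤ u * (-y) := mul_le_mul_of_nonneg_left (by linarith) hupos.le
    linarith
  have hFy : F 0 + (u * x₀ - e / l - e) ≤ F y := by
    rcases abs_cases (F 0 - F y) with ⟨h1, _⟩ | ⟨h1, _⟩
    · exfalso
      have := le_abs_self (F 0)
      linarith
    · linarith
  -- existence of a natural point above F y
  have hNex : ∃ k : ℕ, F y ≤ F k := by
    obtain ⟨n, hn⟩ := exists_nat_ge (max x₀ (l ^ 2 * (F y - F 0 + e / l + e)))
    refine ⟨n, ?_⟩
    have hnx : x₀ ≤ n := le_trans (le_max_left _ _) hn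
    have hn2 : l ^ 2 * (F y - F 0 + e / l + e) ≤ n := le_trans (le_max_right _ _) hn
    have hpos_n : 0 < F n := hpos n hnx
    have hlo := (hF n 0).1
    rw [sub_zero, abs_of_nonneg (Nat.cast_nonneg n)] at hlo
    have hun : F y - F 0 + e / l + e ≤ u * n := by
      have h3 := mul_le_mul_of_nonneg_left hn2 hupos.le
      have h4 : u * (l ^ 2 * (F y - F 0 + e / l + e)) = F y - F 0 + e / l + e := by
        rw [← mul_assoc, hu, one_mul]
      linarith
    rcases abs_cases (F n - F 0) with ⟨h1, _⟩ | ⟨h1, _⟩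
    · linarith
    · exfalso
      have hun2 : u * x₀ ≤ u * n := mul_le_mul_of_nonneg_left hnx hupos.le
      have := le_abs_self (F 0)
      linarith
  set k := Nat.find hNex with hk_def
  have hk : F y ≤ F k := Nat.find_spec hNex
  have hkne : k ≠ 0 := by
    intro h0
    have hF0y : F y ≤ F 0 := by
      have := hk
      rw [h0] at this
      simpa using this
    have hpos' : 0 < u * x₀ - e / l - e := lt_of_le_of_lt (abs_nonneg (F 0)) hK1
    linarith
  obtain ⟨m, hm⟩ := Nat.exists_eq_succ_of_ne_zero hkne
  have hmlt : F m < F y := by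
    have hmk : m < k := by omega
    have := Nat.find_min hNex hmk
    push_neg at this
    exact this
  have hstep := (hF k m).2
  have hkm : |(k : ℝ) - (m : ℝ)| = 1 := by
    rw [hm]
    push_cast
    rw [show ((m:ℝ) + 1) - m = 1 by ring, abs_one]
  rw [hkm] at hstep
  have hFk_lt : F k < F y + (l ^ 2 + l * e + e) := by
    have := le_abs_self (F (k:ℝ) - F (m:ℝ))
    linarith
  have hband2 := (hF k y).1
  have hky : |(k : ℝ) - y| = (k : ℝ) - y :=
    abs_of_nonneg (by linarith [Nat.cast_nonneg (α := ℝ) k])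
  rw [hky] at hband2
  have h3 : u * x₀ ≤ u * ((k : ℝ) - y) :=
    mul_le_mul_of_nonneg_left (by linarith [Nat.cast_nonneg (α := ℝ) k]) hupos.le
  have h4 : |F (k:ℝ) - F y| = F (k:ℝ) - F y := abs_of_nonneg (by linarith)
  rw [h4] at hband2
  linarith

/-- If `F` satisfies the quasi-isometric embedding bounds with
constants `(l², l*e+e)` and `x₀ > l²(l² + l*e + 3e + |F 0| + 1)`, then `F` maps
`[x₀, ∞)` into `(0, ∞)` iff it maps `(-∞, -x₀]` into `(-∞, 0)`, and similarly
with the signs exchanged. -/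
theorem stmt_8 (l e : ℝ) (hl : 1 ≤ l) (he : 0 ≤ e) (F : ℝ → ℝ)
    (hF : ∀ x y : ℝ, (1 / l ^ 2) * |x - y| - e / l - e ≤ |F x - F y| ∧
      |F x - F y| ≤ l ^ 2 * |x - y| + l * e + e)
    (x₀ : ℝ) (hx₀ : x₀ > l ^ 2 * (l ^ 2 + l * e + 3 * e + |F 0| + 1)) :
    ((∀ y : ℝ, x₀ ≤ y → 0 < F y) → (∀ y : ℝ, y ≤ -x₀ → F y < 0)) ∧
    ((∀ y : ℝ, x₀ ≤ y → F y < 0) → (∀ y : ℝ, y ≤ -x₀ → 0 < F y)) := by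
  constructor
  · intro hpos
    exact stmt_8_key l e hl he F hF x₀ hx₀ hpos
  · intro hneg y hy
    have hG : ∀ x z : ℝ, (1 / l ^ 2) * |x - z| - e / l - e ≤ |(-F x) - (-F z)| ∧
        |(-F x) - (-F z)| ≤ l ^ 2 * |x - z| + l * e + e := by
      intro x z
      rw [neg_sub_neg, abs_sub_comm (F z) (F x)]
      exact hF x z
    have hx₀' : x₀ > l ^ 2 * (l ^ 2 + l * e + 3 * e + |(fun x => -F x) 0| + 1) := by
      simpa using hx₀
    have := stmt_8_key l e hl he (fun x => -F x) (fun x z => hG x z) x₀ hx₀'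
      (fun z hz => by simpa using (hneg z hz)) y hy
    simpa using this
end

section
/- Let F: ℝ → ℝ satisfy both quasi-isometric embedding bounds with constants (λ², λε+ε), and suppose F 'fixes the end +∞' in the sense that F(y) → +∞ in the sense that for every M there is y with F(y) > M and F([x₀,∞)) ⊆ (0,∞) for x₀ large. Set l = λ² + λε + ε. Then for every n > λ²l + λε + λ²ε and every x ∈ ℝ, F(x) < F(x+n). (F preserves the order of points that are sufficiently far apart.) -/
/-- if `F` satisfies the quasi-isometric embedding bounds with
constants `(l², l*e+e)`, is unbounded above on every ray `[x, ∞)`, and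
eventually maps `[x₀, ∞)` into `(0, ∞)` (it fixes the end `+∞`), then with
`lc = l² + l*e + e`, for every `n > l²*lc + l*e + l²*e` and every `x`,
`F x < F (x + n)`. -/
theorem stmt_12 (l e : ℝ) (hl : 1 ≤ l) (he : 0 ≤ e) (F : ℝ → ℝ)
    (hF : ∀ x y : ℝ, (1 / l ^ 2) * |x - y| - e / l - e ≤ |F x - F y| ∧
      |F x - F y| ≤ l ^ 2 * |x - y| + l * e + e)
    (hunb : ∀ x M : ℝ, ∃ y : ℝ, x ≤ y ∧ M < F y)
    (hend : ∃ x₀ : ℝ, ∀ x : ℝ, x₀ ≤ x → 0 < F x) :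
    ∀ n : ℝ, n > l ^ 2 * (l ^ 2 + l * e + e) + l * e + l ^ 2 * e →
      ∀ x : ℝ, F x < F (x + n) := by
  intro n hn x
  have hl0 : (0:ℝ) < l := lt_of_lt_of_le one_pos hl
  have hl2 : (0:ℝ) < l ^ 2 := by positivity
  set lc : ℝ := l ^ 2 + l * e + e with hlc
  have hlc0 : 0 < lc := by positivity
  have hn0 : 0 < n := by nlinarith
  have hkey : lc < 1 / l ^ 2 * n - e / l - e := by
    rw [lt_sub_iff_add_lt, lt_sub_iff_add_lt]
    rw [show (1:ℝ) / l ^ 2 * n = n / l ^ 2 by ring, lt_div_iff₀ hl2]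
    have : e / l * l = e := by field_simp
    nlinarith
  by_contra hcon
  push_neg at hcon
  -- lower bound for points at distance ≥ n to the right of x
  have hlow : ∀ z : ℝ, x + n ≤ z → 1 / l ^ 2 * n - e / l - e ≤ |F x - F z| := by
    intro z hz
    have h1 := (hF x z).1
    have habs : n ≤ |x - z| := by
      rw [abs_sub_comm, abs_of_nonneg (by linarith)]; linarith
    have : 1 / l ^ 2 * n ≤ 1 / l ^ 2 * |x - z| := by
      apply mul_le_mul_of_nonneg_left habs; positivity
    linarith
  have h1 : F (x + n) < F x - lc := by
    have h := hlow (x + n) le_rfl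
    have habs : |F x - F (x + n)| = F x - F (x + n) :=
      abs_of_nonneg (by linarith)
    rw [habs] at h
    linarith
  obtain ⟨y, hy1, hy2⟩ := hunb (x + n) (F x)
  -- unit steps move F by at most lc
  have step : ∀ a b : ℝ, |a - b| ≤ 1 → |F a - F b| ≤ lc := by
    intro a b hab
    have h2 := (hF a b).2
    nlinarith
  have key : ∀ k : ℕ, F (min (x + n + k) y) ≤ F x - lc ∨
      ∃ z, x + n ≤ z ∧ |F x - F z| ≤ lc := by
    intro k
    induction k with
    | zero =>
        left
        have : min (x + n + (0:ℕ)) y = x + n := by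
          rw [Nat.cast_zero, add_zero]; exact min_eq_left hy1
        rw [this]; linarith
    | succ k ih =>
        rcases ih with h | h
        · set a := min (x + n + k) y with ha
          set b := min (x + n + (k + 1 : ℕ)) y with hb
          have hcast : ((k + 1 : ℕ) : ℝ) = (k : ℝ) + 1 := by push_cast; ring
          have hab1 : a ≤ b := by
            apply min_le_min _ le_rfl
            rw [hcast]; linarith
          have hab2 : b ≤ a + 1 := by
            rcases le_total (x + n + k) y with hc | hc
            · calc b ≤ x + n + (k + 1 : ℕ) := min_le_left _ _
                _ = (x + n + k) + 1 := by rw [hcast]; ring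
                _ = a + 1 := by rw [ha, min_eq_left hc]
            · calc b ≤ y := min_le_right _ _
                _ = a := by rw [ha, min_eq_right hc]
                _ ≤ a + 1 := by linarith
          have hstep := step a b (by rw [abs_sub_comm, abs_of_nonneg (by linarith)]; linarith)
          have hFb : F b ≤ F a + lc := by
            have := abs_sub_le_iff.mp hstep
            linarith [this.2]
          by_cases hc : F b ≤ F x - lc
          · left; exact hc
          · right
            refine ⟨b, ?_, ?_⟩
            · exact le_min (by rw [hcast]; linarith) hy1
            · push_neg at hc
              rw [abs_of_nonneg (by linarith)]
              linarith
        · right; exact h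
  obtain ⟨k, hk⟩ := exists_nat_ge (y - (x + n))
  have hmin : min (x + n + k) y = y := min_eq_right (by linarith)
  rcases key k with h | ⟨z, hz1, hz2⟩
  · rw [hmin] at h; linarith
  · have := hlow z hz1; linarith
end

section
/- Let G be a finitely generated group whose Cayley graph (with respect to some finite generating set, equipped with the word metric) is quasi-isometric to ℝ. Then G contains an infinite cyclic subgroup of finite index; i.e., G is virtually ℤ. -/
/-- The ball of radius `k` about the identity in the word metric of `G` with
generating set `S`. -/
def wordBall {G : Type*} [Group G] (S : Set G) (k : ℕ) : Set G :=
  {g : G | ∃ L : List G, (∀ x ∈ L, x ∈ S ∨ x⁻¹ ∈ S) ∧ L.length ≤ k ∧ L.prod = g}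

/-- The word metric on `G` with respect to the generating set `S`: the distance
between `g` and `h` is the word length of `g⁻¹ * h`. -/
noncomputable def wordDist {G : Type*} [Group G] (S : Set G) (g h : G) : ℝ :=
  sInf {r : ℝ | ∃ k : ℕ, r = (k : ℝ) ∧ g⁻¹ * h ∈ wordBall S k}

namespace Stmt19
variable {G : Type*} [Group G] {S : Set G}

theorem one_mem_wordBall (S : Set G) (k : ℕ) : (1 : G) ∈ wordBall S k :=
  ⟨[], by simp, by simp, rfl⟩

theorem wordBall_mono {j k : ℕ} (h : j ≤ k) : wordBall S j ⊆ wordBall S k := by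
  rintro g ⟨L, h1, h2, h3⟩
  exact ⟨L, h1, h2.trans h, h3⟩

theorem mul_mem_wordBall {g h : G} {j k : ℕ} (hg : g ∈ wordBall S j)
    (hh : h ∈ wordBall S k) : g * h ∈ wordBall S (j + k) := by
  obtain ⟨L1, a1, b1, c1⟩ := hg
  obtain ⟨L2, a2, b2, c2⟩ := hh
  refine ⟨L1 ++ L2, ?_, ?_, ?_⟩
  · intro x hx
    rcases List.mem_append.1 hx with hx | hx
    · exact a1 x hx
    · exact a2 x hx
  · simpa using Nat.add_le_add b1 b2
  · rw [List.prod_append, c1, c2]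

theorem inv_mem_wordBall {g : G} {k : ℕ} (hg : g ∈ wordBall S k) :
    g⁻¹ ∈ wordBall S k := by
  obtain ⟨L, a, b, c⟩ := hg
  refine ⟨(L.map fun x => x⁻¹).reverse, ?_, ?_, ?_⟩
  · intro x hx
    rw [List.mem_reverse, List.mem_map] at hx
    obtain ⟨y, hy, rfl⟩ := hx
    rcases a y hy with h | h
    · exact Or.inr (by simpa using h)
    · exact Or.inl h
  · simpa using b
  · rw [← List.prod_inv_reverse, c]

theorem exists_wordBall (hgen : Subgroup.closure S = ⊤) (g : G) :
    ∃ k, g ∈ wordBall S k := by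
  have hg : g ∈ Subgroup.closure S := by rw [hgen]; trivial
  induction hg using Subgroup.closure_induction with
  | mem x hx => exact ⟨1, [x], by simp [hx], by simp, by simp⟩
  | one => exact ⟨0, one_mem_wordBall S 0⟩
  | mul x y _ _ hx hy =>
      obtain ⟨j, hj⟩ := hx
      obtain ⟨k, hk⟩ := hy
      exact ⟨j + k, mul_mem_wordBall hj hk⟩
  | inv x _ hx =>
      obtain ⟨k, hk⟩ := hx
      exact ⟨k, inv_mem_wordBall hk⟩

theorem wordBall_finite (hS : S.Finite) (k : ℕ) : (wordBall S k).Finite := by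
  classical
  induction k with
  | zero =>
      refine Set.Finite.subset (Set.finite_singleton 1) ?_
      rintro g ⟨L, a, b, c⟩
      rw [Nat.le_zero, List.length_eq_zero_iff] at b
      subst b
      simp at c
      simp [← c]
  | succ k ih =>
      have hTfin : (insert 1 (S ∪ (fun x : G => x⁻¹) '' S) : Set G).Finite :=
        (hS.union (hS.image _)).insert 1
      refine Set.Finite.subset (hTfin.mul ih) ?_
      rintro g ⟨L, a, b, c⟩
      match L, a, b, c with
      | [], a, b, c =>
          simp at c
          exact ⟨1, Set.mem_insert 1 _, 1, one_mem_wordBall S k, by simp [c]⟩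
      | x :: L', a, b, c =>
          have hx : x ∈ insert 1 (S ∪ (fun x : G => x⁻¹) '' S) := by
            rcases a x (by simp) with h | h
            · exact Or.inr (Or.inl h)
            · exact Or.inr (Or.inr ⟨x⁻¹, h, by simp⟩)
          have hL' : L'.prod ∈ wordBall S k := by
            refine ⟨L', fun y hy => a y (by simp [hy]), ?_, rfl⟩
            simpa using Nat.succ_le_succ_iff.mp b
          rw [← c, List.prod_cons]
          exact Set.mul_mem_mul hx hL'


open Classical in
noncomputable def wlen (hex : ∀ g : G, ∃ k, g ∈ wordBall S k) (g : G) : ℕ :=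
  Nat.find (hex g)

variable (hex : ∀ g : G, ∃ k, g ∈ wordBall S k)

include hex

theorem wlen_spec (g : G) : g ∈ wordBall S (wlen hex g) := by
  classical
  exact Nat.find_spec (hex g)

theorem wlen_min {g : G} {k : ℕ} (h : g ∈ wordBall S k) : wlen hex g ≤ k := by
  classical
  exact Nat.find_min' (hex g) h

theorem wordDist_eq (a b : G) : wordDist S a b = (wlen hex (a⁻¹ * b) : ℝ) := by
  apply le_antisymm
  · exact csInf_le ⟨0, by rintro r ⟨k, rfl, _⟩; positivity⟩
      ⟨wlen hex (a⁻¹ * b), rfl, wlen_spec hex _⟩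
  · refine le_csInf ⟨(wlen hex (a⁻¹ * b) : ℝ), wlen hex (a⁻¹ * b), rfl, wlen_spec hex _⟩ ?_
    rintro r ⟨k, rfl, hk⟩
    exact_mod_cast wlen_min hex hk

theorem wlen_one : wlen hex (1 : G) = 0 :=
  Nat.le_zero.mp (wlen_min hex (one_mem_wordBall S 0))

theorem wlen_mul_le (a b : G) : wlen hex (a * b) ≤ wlen hex a + wlen hex b :=
  wlen_min hex (mul_mem_wordBall (wlen_spec hex a) (wlen_spec hex b))

theorem wlen_inv (a : G) : wlen hex a⁻¹ = wlen hex a := by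
  apply le_antisymm
  · exact wlen_min hex (inv_mem_wordBall (wlen_spec hex a))
  · have := wlen_min hex (inv_mem_wordBall (wlen_spec hex a⁻¹))
    simpa using this

theorem wordDist_nonneg (a b : G) : 0 ≤ wordDist S a b := by
  rw [wordDist_eq hex]; positivity

theorem wordDist_left_inv (x a b : G) : wordDist S (x * a) (x * b) = wordDist S a b := by
  rw [wordDist_eq hex, wordDist_eq hex]
  congr 2
  group

theorem wordDist_symm (a b : G) : wordDist S a b = wordDist S b a := by
  rw [wordDist_eq hex, wordDist_eq hex]
  rw [show b⁻¹ * a = (a⁻¹ * b)⁻¹ by group, wlen_inv hex]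

theorem wordDist_triangle (a b c : G) :
    wordDist S a c ≤ wordDist S a b + wordDist S b c := by
  rw [wordDist_eq hex, wordDist_eq hex, wordDist_eq hex]
  have h := wlen_mul_le hex (a⁻¹ * b) (b⁻¹ * c)
  rw [show a⁻¹ * b * (b⁻¹ * c) = a⁻¹ * c by group] at h
  exact_mod_cast h

theorem wordDist_le_of_mem {a b : G} {k : ℕ} (h : a⁻¹ * b ∈ wordBall S k) :
    wordDist S a b ≤ (k : ℝ) := by
  rw [wordDist_eq hex]
  exact_mod_cast wlen_min hex h

theorem mem_of_wordDist_le {a b : G} {k : ℕ} (h : wordDist S a b ≤ (k : ℝ)) :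
    a⁻¹ * b ∈ wordBall S k := by
  rw [wordDist_eq hex] at h
  exact wordBall_mono (by exact_mod_cast h) (wlen_spec hex _)

theorem exists_geodesic (x z : G) :
    ∃ (N : ℕ) (w : ℕ → G), w 0 = x ∧ w N = z ∧ (N : ℝ) = wordDist S x z ∧
      ∀ i j, i ≤ j → j ≤ N → wordDist S (w i) (w j) = ((j - i : ℕ) : ℝ) := by
  obtain ⟨L, hmemL, hlenL, hprodL⟩ := wlen_spec hex (x⁻¹ * z)
  have hlen : L.length = wlen hex (x⁻¹ * z) := by
    refine le_antisymm hlenL (wlen_min hex ⟨L, hmemL, le_refl _, hprodL⟩)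
  set N := L.length with hN
  refine ⟨N, fun i => x * (L.take i).prod, by simp, ?_, ?_, ?_⟩
  · simp [hN, hprodL]
  · rw [wordDist_eq hex, ← hlen]
  · intro i j hij hjN
    have key : (x * (L.take i).prod)⁻¹ * (x * (L.take j).prod) = ((L.take j).drop i).prod := by
      have h1 : L.take j = (L.take j).take i ++ (L.take j).drop i := (List.take_append_drop i _).symm
      have h2 : (L.take j).take i = L.take i := by
        rw [List.take_take, min_eq_left hij]
      calc (x * (L.take i).prod)⁻¹ * (x * (L.take j).prod)
          = (L.take i).prod⁻¹ * (L.take j).prod := by group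
        _ = (L.take i).prod⁻¹ * ((L.take j).take i ++ (L.take j).drop i).prod := by rw [← h1]
        _ = ((L.take j).drop i).prod := by rw [List.prod_append, h2]; group
    have hlendrop : ((L.take j).drop i).length = j - i := by
      simp [List.length_drop, List.length_take, min_eq_left hjN]
      omega
    have hub : wlen hex ((x * (L.take i).prod)⁻¹ * (x * (L.take j).prod)) ≤ j - i := by
      rw [key]
      refine wlen_min hex ⟨(L.take j).drop i, ?_, le_of_eq hlendrop, rfl⟩
      intro y hy
      exact hmemL y (((List.drop_sublist i _).trans (List.take_sublist j L)).mem hy)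
    have hlb : j - i ≤ wlen hex ((x * (L.take i).prod)⁻¹ * (x * (L.take j).prod)) := by
      have h1 : wlen hex (x⁻¹ * (x * (L.take i).prod)) ≤ i := by
        rw [show x⁻¹ * (x * (L.take i).prod) = (L.take i).prod by group]
        refine wlen_min hex ⟨L.take i, ?_, by simp, rfl⟩
        intro y hy
        exact hmemL y ((List.take_sublist i L).mem hy)
      have h2 : wlen hex ((x * (L.take j).prod)⁻¹ * z) ≤ N - j := by
        have hdrop : (x * (L.take j).prod)⁻¹ * z = (L.drop j).prod := by
          have h3 : L.prod = (L.take j).prod * (L.drop j).prod := by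
            rw [← List.prod_append, List.take_append_drop]
          calc (x * (L.take j).prod)⁻¹ * z = (L.take j).prod⁻¹ * (x⁻¹ * z) := by group
            _ = (L.take j).prod⁻¹ * ((L.take j).prod * (L.drop j).prod) := by
                rw [← hprodL, h3]
            _ = (L.drop j).prod := by group
        rw [hdrop]
        refine wlen_min hex ⟨L.drop j, ?_, by simp; omega, rfl⟩
        intro y hy
        exact hmemL y ((List.drop_sublist j L).mem hy)
      have htri1 := wlen_mul_le hex (x⁻¹ * (x * (L.take i).prod))
        ((x * (L.take i).prod)⁻¹ * (x * (L.take j).prod))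
      have htri2 := wlen_mul_le hex
        (x⁻¹ * (x * (L.take i).prod) * ((x * (L.take i).prod)⁻¹ * (x * (L.take j).prod)))
        ((x * (L.take j).prod)⁻¹ * z)
      rw [show x⁻¹ * (x * (L.take i).prod) * ((x * (L.take i).prod)⁻¹ * (x * (L.take j).prod)) *
        ((x * (L.take j).prod)⁻¹ * z) = x⁻¹ * z by group] at htri2
      have hNle := htri2.trans (Nat.add_le_add_right htri1 _)
      rw [← hlen, hN] at hNle
      omega
    rw [wordDist_eq hex]
    exact_mod_cast le_antisymm hub hlb



omit hex

/-- Constants. -/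
noncomputable def D0 (l e : ℝ) : ℝ := 2*(l^2*((l+e)+e)+e) + 2
noncomputable def M1 (l e : ℝ) : ℝ := l*(l*(l+2*e)) + e
noncomputable def mC (l e : ℝ) : ℝ := D0 l e + M1 l e + 1
noncomputable def MC (l e : ℝ) : ℝ := l^2*(mC l e + e) + e
noncomputable def MB (l e : ℝ) : ℝ := l^2*(MC l e + e) + e

theorem D0_pos {l e : ℝ} (hl : 1 ≤ l) (he : 0 ≤ e) : 0 < D0 l e := by
  unfold D0; nlinarith
theorem M1_nonneg {l e : ℝ} (hl : 1 ≤ l) (he : 0 ≤ e) : 0 ≤ M1 l e := by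
  have h0 : (0:ℝ) < l := lt_of_lt_of_le one_pos hl
  unfold M1
  nlinarith [mul_pos h0 (mul_pos h0 (by linarith : (0:ℝ) < l + 2*e))]
theorem mC_ge_one {l e : ℝ} (hl : 1 ≤ l) (he : 0 ≤ e) : 1 ≤ mC l e := by
  have h1 := D0_pos hl he
  have h2 := M1_nonneg hl he
  unfold mC; linarith
theorem MC_ge_mC {l e : ℝ} (hl : 1 ≤ l) (he : 0 ≤ e) : mC l e ≤ MC l e := by
  have h1 := mC_ge_one hl he
  unfold MC
  nlinarith [mul_nonneg (by nlinarith : (0:ℝ) ≤ l^2 - 1) (by linarith : (0:ℝ) ≤ mC l e + e)]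
theorem MC_ge_one {l e : ℝ} (hl : 1 ≤ l) (he : 0 ≤ e) : 1 ≤ MC l e :=
  le_trans (mC_ge_one hl he) (MC_ge_mC hl he)
theorem MB_ge_MC {l e : ℝ} (hl : 1 ≤ l) (he : 0 ≤ e) : MC l e ≤ MB l e := by
  have h1 := MC_ge_one hl he
  unfold MB
  nlinarith [mul_nonneg (by nlinarith : (0:ℝ) ≤ l^2 - 1) (by linarith : (0:ℝ) ≤ MC l e + e)]

noncomputable def T0 (l e : ℝ) : ℝ := MC l e + l^2*(1+e) + e
noncomputable def W0 (l e : ℝ) : ℝ := l^2*(T0 l e + MC l e + e) + e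

theorem T0_ge_MC {l e : ℝ} (hl : 1 ≤ l) (he : 0 ≤ e) : MC l e ≤ T0 l e := by
  unfold T0
  nlinarith [mul_nonneg (sq_nonneg l) (by linarith : (0:ℝ) ≤ 1+e)]
theorem T0_ge_one {l e : ℝ} (hl : 1 ≤ l) (he : 0 ≤ e) : 1 ≤ T0 l e :=
  le_trans (MC_ge_one hl he) (T0_ge_MC hl he)
theorem W0_ge {l e : ℝ} (hl : 1 ≤ l) (he : 0 ≤ e) : T0 l e + MC l e ≤ W0 l e := by
  have h1 := T0_ge_one (l := l) (e := e) hl he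
  have h2 := MC_ge_one (l := l) (e := e) hl he
  unfold W0
  nlinarith [mul_nonneg (by nlinarith : (0:ℝ) ≤ l^2 - 1)
    (by linarith : (0:ℝ) ≤ T0 l e + MC l e + e)]
theorem W0_pos {l e : ℝ} (hl : 1 ≤ l) (he : 0 ≤ e) : 0 < W0 l e := by
  have h1 := T0_ge_one (l := l) (e := e) hl he
  have h2 := MC_ge_one (l := l) (e := e) hl he
  have := W0_ge (l := l) (e := e) hl he
  linarith

/-- Quasi-geodesic chains in `ℝ` do not overshoot. -/
theorem quasiMono {l e : ℝ} (hl : 1 ≤ l) (he : 0 ≤ e) (γ : ℕ → ℝ) (N : ℕ)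
    (hstep : ∀ t, t < N → |γ (t+1) - γ t| ≤ l + e)
    (hlow : ∀ i j, i ≤ j → j ≤ N → ((j : ℝ) - (i : ℝ))/l - e ≤ |γ i - γ j|)
    (hup : ∀ i j, i ≤ j → j ≤ N → |γ i - γ j| ≤ l*((j : ℝ) - (i : ℝ)) + e) :
    ∀ k, k ≤ N → γ k ≤ max (γ 0) (γ N) + D0 l e := by
  classical
  intro k hkN
  by_contra hcon
  push_neg at hcon
  set s : ℝ := l + e with hs
  set U : ℝ := max (γ 0) (γ N) with hU
  set V : ℝ := U + l^2*(s+e) + e + 1 with hV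
  have hl0 : (0:ℝ) < l := lt_of_lt_of_le one_pos hl
  have hVU : U < V := by nlinarith
  have hD : D0 l e = 2*(l^2*(s+e)+e)+2 := by rw [hs]; unfold D0; ring
  have hsq : (0:ℝ) ≤ l^2*(s+e) := by positivity
  have hkV : V < γ k := by
    have h0 : (0:ℝ) < l := lt_of_lt_of_le one_pos hl
    rw [hV]
    nlinarith [hcon]
  -- greatest i ≤ k with γ i ≤ V
  have hP0 : γ 0 ≤ V := le_trans (le_max_left _ _) (le_of_lt hVU)
  set i := Nat.findGreatest (fun t => γ t ≤ V) k with hi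
  have hiP : γ i ≤ V := Nat.findGreatest_spec (P := fun t => γ t ≤ V) (Nat.zero_le k) hP0
  have hik : i ≤ k := Nat.findGreatest_le k
  have hikstrict : i < k := by
    rcases lt_or_eq_of_le hik with h | h
    · exact h
    · rw [h] at hiP; linarith
  have hnot : ¬ γ (i+1) ≤ V := Nat.findGreatest_is_greatest (Nat.lt_succ_self i) hikstrict
  push_neg at hnot
  have hiup : V - s < γ i := by
    have := hstep i (lt_of_lt_of_le hikstrict hkN)
    have h2 : γ (i+1) - γ i ≤ s := le_trans (le_abs_self _) this
    linarith
  -- least j ≥ k with γ j ≤ V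
  have hQN : k ≤ N ∧ N ≤ N ∧ γ N ≤ V :=
    ⟨hkN, le_refl N, le_trans (le_max_right _ _) (le_of_lt hVU)⟩
  have hQex : ∃ t, k ≤ t ∧ t ≤ N ∧ γ t ≤ V := ⟨N, hQN⟩
  set j := Nat.find hQex with hj
  have hjQ : k ≤ j ∧ j ≤ N ∧ γ j ≤ V := Nat.find_spec hQex
  have hkj : k < j := by
    rcases lt_or_eq_of_le hjQ.1 with h | h
    · exact h
    · rw [← h] at hjQ; linarith [hjQ.2.2]
  have hj1 : 1 ≤ j := le_trans (Nat.succ_le_succ (Nat.zero_le k)) hkj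
  have hnotj : ¬ (k ≤ j - 1 ∧ j - 1 ≤ N ∧ γ (j-1) ≤ V) :=
    Nat.find_min hQex (by omega)
  have hjm1 : V < γ (j-1) := by
    by_contra hh
    push_neg at hh
    exact hnotj ⟨by omega, by omega, hh⟩
  have hjup : V - s < γ j := by
    have hstepj := hstep (j-1) (by omega)
    rw [show j - 1 + 1 = j by omega] at hstepj
    have h2 : γ (j-1) - γ j ≤ s := by
      have := neg_abs_le (γ j - γ (j-1))
      have h3 : |γ j - γ (j-1)| ≤ s := hstepj
      cases abs_le.mp h3 with
      | intro a b => linarith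
    linarith
  -- distance between i and j small
  have habsij : |γ i - γ j| ≤ s := by
    rw [abs_le]
    constructor <;> [linarith [hjQ.2.2]; linarith]
  have hij : i ≤ j := le_of_lt (lt_trans hikstrict hkj)
  have hlow_ij := hlow i j hij hjQ.2.1
  have hji : ((j:ℝ) - (i:ℝ)) ≤ l * (s + e) := by
    have : ((j:ℝ) - (i:ℝ))/l ≤ s + e := by linarith
    calc ((j:ℝ) - (i:ℝ)) = (((j:ℝ) - (i:ℝ))/l) * l := by field_simp
      _ ≤ (s+e) * l := mul_le_mul_of_nonneg_right this (le_of_lt hl0)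
      _ = l * (s+e) := mul_comm _ _
  have hup_ik := hup i k (le_of_lt hikstrict) hkN
  have hki : ((k:ℝ) - (i:ℝ)) ≤ (j:ℝ) - (i:ℝ) := by
    have : (k:ℝ) ≤ (j:ℝ) := by exact_mod_cast le_of_lt hkj
    linarith
  have h1 : γ k - γ i ≤ l*(l*(s+e)) + e := by
    have h2 : γ k - γ i ≤ |γ i - γ k| := by
      rw [abs_sub_comm]
      exact le_abs_self _
    have h3 : l * ((k:ℝ) - (i:ℝ)) ≤ l * ((j:ℝ) - (i:ℝ)) := by
      exact mul_le_mul_of_nonneg_left hki (le_of_lt hl0)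
    have h4 : l * ((j:ℝ) - (i:ℝ)) ≤ l * (l*(s+e)) := by
      exact mul_le_mul_of_nonneg_left hji (le_of_lt hl0)
    linarith
  have h5 : l^2*(s+e) + e + 1 < γ k - γ i := by
    have h6 : γ i ≤ V := hiP
    rw [hV] at h6
    linarith
  have h7 : l*(l*(s+e)) = l^2*(s+e) := by ring
  linarith

theorem quasiMono_min {l e : ℝ} (hl : 1 ≤ l) (he : 0 ≤ e) (γ : ℕ → ℝ) (N : ℕ)
    (hstep : ∀ t, t < N → |γ (t+1) - γ t| ≤ l + e)
    (hlow : ∀ i j, i ≤ j → j ≤ N → ((j : ℝ) - (i : ℝ))/l - e ≤ |γ i - γ j|)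
    (hup : ∀ i j, i ≤ j → j ≤ N → |γ i - γ j| ≤ l*((j : ℝ) - (i : ℝ)) + e) :
    ∀ k, k ≤ N → min (γ 0) (γ N) - D0 l e ≤ γ k := by
  intro k hkN
  have := quasiMono hl he (fun t => -γ t) N
    (fun t ht => by
      rw [show -γ (t+1) - -γ t = -(γ (t+1) - γ t) by ring, abs_neg]; exact hstep t ht)
    (fun i j h1 h2 => by
      rw [show -γ i - -γ j = -(γ i - γ j) by ring, abs_neg]; exact hlow i j h1 h2)
    (fun i j h1 h2 => by
      rw [show -γ i - -γ j = -(γ i - γ j) by ring, abs_neg]; exact hup i j h1 h2)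
    k hkN
  simp only [max_neg_neg] at this
  linarith



set_option linter.unusedSectionVars false

/-- `g` preserves the coarse order on `φ`-separated pairs. -/
def Pres (φ : G → ℝ) (l e : ℝ) (g : G) : Prop :=
  ∀ x y : G, φ x + MC l e ≤ φ y → φ (g*x) < φ (g*y)

/-- `g` reverses the coarse order on `φ`-separated pairs. -/
def Rev (φ : G → ℝ) (l e : ℝ) (g : G) : Prop :=
  ∀ x y : G, φ x + MC l e ≤ φ y → φ (g*y) < φ (g*x)

section Main

variable (hex : ∀ g : G, ∃ k, g ∈ wordBall S k)
variable {l e c : ℝ} (φ : G → ℝ)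

include hex

/-- Betweenness: the image under left translation by `g` of a well-separated
ordered triple is strictly ordered (in one of the two directions). -/
theorem between (hl : 1 ≤ l) (he : 0 ≤ e)
    (hub : ∀ a b : G, |φ a - φ b| ≤ l * wordDist S a b + e)
    (hlb : ∀ a b : G, wordDist S a b ≤ l * (|φ a - φ b| + e))
    (g x y z : G) (hxy : φ x + MC l e ≤ φ y) (hyz : φ y + MC l e ≤ φ z) :
    min (φ (g*x)) (φ (g*z)) + mC l e ≤ φ (g*y) ∧
      φ (g*y) + mC l e ≤ max (φ (g*x)) (φ (g*z)) := by
  classical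
  have hl0 : (0:ℝ) < l := lt_of_lt_of_le one_pos hl
  have hMC1 : 1 ≤ MC l e := MC_ge_one hl he
  obtain ⟨N, w, hw0, hwN, hwdist, hwij⟩ := exists_geodesic hex x z
  -- distance along geodesic is exactly j - i; derive φ-chain bounds
  have hone : ∀ t, t < N → wordDist S (w t) (w (t+1)) = 1 := by
    intro t ht
    have := hwij t (t+1) (Nat.le_succ t) ht
    simpa using this
  have hstepφ : ∀ t, t < N → |φ (w (t+1)) - φ (w t)| ≤ l + e := by
    intro t ht
    have h := hub (w (t+1)) (w t)
    rw [wordDist_symm hex, hone t ht] at h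
    linarith
  -- IVT: find i with φ (w i) close to φ y
  have hP0 : φ (w 0) ≤ φ y := by rw [hw0]; linarith
  set i := Nat.findGreatest (fun t => φ (w t) ≤ φ y) N with hidef
  have hiP : φ (w i) ≤ φ y := Nat.findGreatest_spec (P := fun t => φ (w t) ≤ φ y) (Nat.zero_le N) hP0
  have hiN : i ≤ N := Nat.findGreatest_le N
  have hiNs : i < N := by
    rcases lt_or_eq_of_le hiN with h | h
    · exact h
    · rw [h, hwN] at hiP; linarith
  have hnot : ¬ φ (w (i+1)) ≤ φ y :=
    Nat.findGreatest_is_greatest (Nat.lt_succ_self i) hiNs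
  push_neg at hnot
  have hclose : |φ (w i) - φ y| ≤ l + e := by
    have := hstepφ i hiNs
    rw [abs_le] at this ⊢
    constructor <;> [linarith [this.1]; linarith]
  -- transported closeness
  have hgy : |φ (g * w i) - φ (g * y)| ≤ M1 l e := by
    have h1 : wordDist S (w i) y ≤ l * ((l+e) + e) :=
      le_trans (hlb (w i) y) (by
        have := abs_nonneg (φ (w i) - φ y)
        nlinarith [hclose])
    have h2 := hub (g * w i) (g * y)
    rw [wordDist_left_inv hex] at h2
    unfold M1
    have h3 : l * wordDist S (w i) y ≤ l * (l * ((l+e)+e)) :=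
      mul_le_mul_of_nonneg_left h1 (le_of_lt hl0)
    have h4 : l * (l * ((l+e)+e)) = l*(l*(l+2*e)) := by ring
    linarith
  -- quasi-monotone bounds on the transported geodesic
  have hstepγ : ∀ t, t < N → |φ (g * w (t+1)) - φ (g * w t)| ≤ l + e := by
    intro t ht
    have h := hub (g * w (t+1)) (g * w t)
    rw [wordDist_left_inv hex, wordDist_symm hex, hone t ht] at h
    simpa using h
  have hlowγ : ∀ a b : ℕ, a ≤ b → b ≤ N →
      ((b:ℝ) - (a:ℝ))/l - e ≤ |φ (g * w a) - φ (g * w b)| := by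
    intro a b hab hbN
    have h := hlb (g * w a) (g * w b)
    rw [wordDist_left_inv hex, hwij a b hab hbN] at h
    have hcast : ((b - a : ℕ) : ℝ) = (b:ℝ) - (a:ℝ) := by
      push_cast [Nat.cast_sub hab]
      ring
    rw [hcast] at h
    have h2 : ((b:ℝ)-(a:ℝ))/l ≤ |φ (g * w a) - φ (g * w b)| + e := by
      rw [div_le_iff₀ hl0]
      nlinarith
    linarith
  have hupγ : ∀ a b : ℕ, a ≤ b → b ≤ N →
      |φ (g * w a) - φ (g * w b)| ≤ l*((b:ℝ) - (a:ℝ)) + e := by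
    intro a b hab hbN
    have h := hub (g * w a) (g * w b)
    rw [wordDist_left_inv hex, hwij a b hab hbN] at h
    have hcast : ((b - a : ℕ) : ℝ) = (b:ℝ) - (a:ℝ) := by
      push_cast [Nat.cast_sub hab]
      ring
    rw [hcast] at h
    exact h
  have hAi := quasiMono hl he (fun t => φ (g * w t)) N hstepγ hlowγ hupγ i hiN
  have hBi := quasiMono_min hl he (fun t => φ (g * w t)) N hstepγ hlowγ hupγ i hiN
  simp only [hw0, hwN] at hAi hBi
  -- φ (g*y) is within D0 + M1 of the interval
  have habs := abs_le.mp hgy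
  have hgyA : φ (g * y) ≤ max (φ (g*x)) (φ (g*z)) + D0 l e + M1 l e := by linarith
  have hgyB : min (φ (g*x)) (φ (g*z)) - D0 l e - M1 l e ≤ φ (g * y) := by linarith
  -- gap lower bounds
  have gapgen : ∀ u v : G, φ u + MC l e ≤ φ v → mC l e ≤ |φ (g*u) - φ (g*v)| := by
    intro u v huv
    have habsuv : MC l e ≤ |φ u - φ v| := by
      rw [abs_sub_comm, abs_of_nonneg (by linarith)]
      linarith
    have hd : (MC l e - e)/l ≤ wordDist S u v := by
      have h := hub u v
      rw [div_le_iff₀ hl0]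
      nlinarith
    have h := hlb (g*u) (g*v)
    rw [wordDist_left_inv hex] at h
    have hkey : (MC l e - e)/l = l*(mC l e + e) := by
      unfold MC
      field_simp
      ring
    rw [hkey] at hd
    have h2 : l*(mC l e + e) ≤ l * (|φ (g*u) - φ (g*v)| + e) := le_trans hd h
    have h3 : mC l e + e ≤ |φ (g*u) - φ (g*v)| + e :=
      le_of_mul_le_mul_left h2 hl0
    linarith
  have gapx := gapgen x y hxy
  have gapz : mC l e ≤ |φ (g*z) - φ (g*y)| := by
    rw [abs_sub_comm]
    exact gapgen y z hyz
  have hmCeq : mC l e = D0 l e + M1 l e + 1 := rfl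
  rcases le_total (φ (g*x)) (φ (g*z)) with hxz | hxz
  · rw [min_eq_left hxz] at hgyB ⊢
    rw [max_eq_right hxz] at hgyA ⊢
    constructor
    · rcases le_or_gt (φ (g*y)) (φ (g*x)) with h | h
      · rw [abs_of_nonneg (by linarith)] at gapx
        linarith
      · rw [abs_of_nonpos (by linarith)] at gapx
        linarith
    · rcases le_or_gt (φ (g*z)) (φ (g*y)) with h | h
      · rw [abs_of_nonpos (by linarith)] at gapz
        linarith
      · rw [abs_of_nonneg (by linarith)] at gapz
        linarith
  · rw [min_eq_right hxz] at hgyB ⊢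
    rw [max_eq_left hxz] at hgyA ⊢
    constructor
    · rcases le_or_gt (φ (g*y)) (φ (g*z)) with h | h
      · rw [abs_of_nonneg (by linarith)] at gapz
        linarith
      · rw [abs_of_nonpos (by linarith)] at gapz
        linarith
    · rcases le_or_gt (φ (g*x)) (φ (g*y)) with h | h
      · rw [abs_of_nonpos (by linarith)] at gapx
        linarith
      · rw [abs_of_nonneg (by linarith)] at gapx
        linarith

theorem gap_transport (hl : 1 ≤ l) (he : 0 ≤ e)
    (hub : ∀ a b : G, |φ a - φ b| ≤ l * wordDist S a b + e)
    (hlb : ∀ a b : G, wordDist S a b ≤ l * (|φ a - φ b| + e))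
    (k u v : G) : (|φ u - φ v| - e)/l^2 - e ≤ |φ (k*u) - φ (k*v)| := by
  have hl0 : (0:ℝ) < l := lt_of_lt_of_le one_pos hl
  have h1 := hub u v
  have h2 := hlb (k*u) (k*v)
  rw [wordDist_left_inv hex] at h2
  have h3 : (|φ u - φ v| - e)/l ≤ wordDist S u v := by
    rw [div_le_iff₀ hl0]
    nlinarith
  have h4 : (|φ u - φ v| - e)/l ≤ l * (|φ (k*u) - φ (k*v)| + e) := le_trans h3 h2
  rw [div_le_iff₀ hl0] at h4
  have h5 : (|φ u - φ v| - e)/l^2 ≤ |φ (k*u) - φ (k*v)| + e := by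
    rw [div_le_iff₀ (by positivity : (0:ℝ) < l^2)]
    nlinarith [abs_nonneg (φ (k*u) - φ (k*v))]
  linarith

theorem gap_transport_up (hl : 1 ≤ l) (he : 0 ≤ e)
    (hub : ∀ a b : G, |φ a - φ b| ≤ l * wordDist S a b + e)
    (hlb : ∀ a b : G, wordDist S a b ≤ l * (|φ a - φ b| + e))
    (k u v : G) : |φ (k*u) - φ (k*v)| ≤ l^2 * (|φ u - φ v| + e) + e := by
  have hl0 : (0:ℝ) < l := lt_of_lt_of_le one_pos hl
  have h1 := hlb u v
  have h2 := hub (k*u) (k*v)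
  rw [wordDist_left_inv hex] at h2
  nlinarith [wordDist_nonneg hex u v]

theorem gap_lower (hl : 1 ≤ l) (he : 0 ≤ e)
    (hub : ∀ a b : G, |φ a - φ b| ≤ l * wordDist S a b + e)
    (hlb : ∀ a b : G, wordDist S a b ≤ l * (|φ a - φ b| + e))
    (k u v : G) (huv : φ u + MC l e ≤ φ v) : mC l e ≤ |φ (k*u) - φ (k*v)| := by
  have hl0 : (0:ℝ) < l := lt_of_lt_of_le one_pos hl
  have habs : MC l e ≤ |φ u - φ v| := by
    rw [abs_sub_comm, abs_of_nonneg (by linarith [MC_ge_one hl he])]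
    linarith
  have h := gap_transport hex φ hl he hub hlb k u v
  have hkey : (MC l e - e)/l^2 = mC l e + e := by
    unfold MC
    field_simp
    ring
  have h2 : (MC l e - e)/l^2 ≤ (|φ u - φ v| - e)/l^2 := by
    gcongr
  linarith

theorem gap_lower_big (hl : 1 ≤ l) (he : 0 ≤ e)
    (hub : ∀ a b : G, |φ a - φ b| ≤ l * wordDist S a b + e)
    (hlb : ∀ a b : G, wordDist S a b ≤ l * (|φ a - φ b| + e))
    (k u v : G) (huv : φ u + MB l e ≤ φ v) : MC l e ≤ |φ (k*u) - φ (k*v)| := by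
  have hl0 : (0:ℝ) < l := lt_of_lt_of_le one_pos hl
  have habs : MB l e ≤ |φ u - φ v| := by
    rw [abs_sub_comm, abs_of_nonneg (by linarith [MB_ge_MC hl he, MC_ge_one hl he])]
    linarith
  have h := gap_transport hex φ hl he hub hlb k u v
  have hkey : (MB l e - e)/l^2 = MC l e + e := by
    unfold MB
    field_simp
    ring
  have h2 : (MB l e - e)/l^2 ≤ (|φ u - φ v| - e)/l^2 := by
    gcongr
  linarith

theorem coherence (hl : 1 ≤ l) (he : 0 ≤ e)
    (hub : ∀ a b : G, |φ a - φ b| ≤ l * wordDist S a b + e)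
    (hlb : ∀ a b : G, wordDist S a b ≤ l * (|φ a - φ b| + e))
    (hden : ∀ y : ℝ, ∃ a : G, |y - φ a| ≤ c)
    (g x y u v : G) (hxy : φ x + MC l e ≤ φ y) (huv : φ u + MC l e ≤ φ v) :
    (φ (g*x) < φ (g*y) ↔ φ (g*u) < φ (g*v)) := by
  have hl0 : (0:ℝ) < l := lt_of_lt_of_le one_pos hl
  have hmC1 : 1 ≤ mC l e := mC_ge_one hl he
  obtain ⟨qm, hqm⟩ := hden (min (φ x) (φ u) - MC l e - c)
  obtain ⟨qp, hqp⟩ := hden (max (φ y) (φ v) + MC l e + c)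
  have hqm' : φ qm ≤ min (φ x) (φ u) - MC l e := by
    rw [abs_le] at hqm
    linarith [hqm.1]
  have hqp' : max (φ y) (φ v) + MC l e ≤ φ qp := by
    rw [abs_le] at hqp
    linarith [hqp.2]
  have key : ∀ p q : G, φ p + MC l e ≤ φ q → φ qm + MC l e ≤ φ p →
      φ q + MC l e ≤ φ qp → (φ (g*p) < φ (g*q) ↔ φ (g*qm) < φ (g*qp)) := by
    intro p q hpq hqmp hqqp
    have B1 := between hex φ hl he hub hlb g qm p q hqmp hpq
    have B2 := between hex φ hl he hub hlb g p q qp hpq hqqp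
    have gappq := gap_lower hex φ hl he hub hlb g p q hpq
    constructor
    · intro h
      have h1 : φ (g*qm) + mC l e ≤ φ (g*p) := by
        rcases le_total (φ (g*qm)) (φ (g*q)) with hcc | hcc
        · rw [min_eq_left hcc] at B1
          exact B1.1
        · rw [min_eq_right hcc] at B1
          linarith [B1.1]
      have h2 : φ (g*q) + mC l e ≤ φ (g*qp) := by
        rcases le_total (φ (g*p)) (φ (g*qp)) with hcc | hcc
        · rw [max_eq_right hcc] at B2
          exact B2.2
        · rw [max_eq_left hcc] at B2
          linarith [B2.2]
      linarith
    · intro h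
      by_contra hcon
      push_neg at hcon
      have hlt : φ (g*q) + mC l e ≤ φ (g*p) := by
        rcases le_or_gt (φ (g*q)) (φ (g*p)) with hcc | hcc
        · rw [abs_sub_comm, abs_of_nonpos (by linarith)] at gappq
          linarith
        · linarith [hcon.trans_lt hcc]
      have h1 : φ (g*p) + mC l e ≤ φ (g*qm) := by
        rcases le_total (φ (g*qm)) (φ (g*q)) with hcc | hcc
        · rw [max_eq_right hcc] at B1
          linarith [B1.2]
        · rw [max_eq_left hcc] at B1
          exact B1.2
      have h2 : φ (g*qp) + mC l e ≤ φ (g*q) := by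
        rcases le_total (φ (g*p)) (φ (g*qp)) with hcc | hcc
        · rw [min_eq_left hcc] at B2
          linarith [B2.1]
        · rw [min_eq_right hcc] at B2
          exact B2.1
      linarith
  have k1 := key x y hxy (by
    have := min_le_left (φ x) (φ u)
    linarith) (by
    have := le_max_left (φ y) (φ v)
    linarith)
  have k2 := key u v huv (by
    have := min_le_right (φ x) (φ u)
    linarith) (by
    have := le_max_right (φ y) (φ v)
    linarith)
  exact k1.trans k2.symm

variable {c : ℝ}

theorem pres_or_rev (hl : 1 ≤ l) (he : 0 ≤ e)
    (hub : ∀ a b : G, |φ a - φ b| ≤ l * wordDist S a b + e)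
    (hlb : ∀ a b : G, wordDist S a b ≤ l * (|φ a - φ b| + e))
    (hden : ∀ y : ℝ, ∃ a : G, |y - φ a| ≤ c)
    (g : G) : Pres φ l e g ∨ Rev φ l e g := by
  obtain ⟨p, hp⟩ := hden (φ 1 + MC l e + c)
  have hp' : φ 1 + MC l e ≤ φ p := by
    rw [abs_le] at hp
    linarith [hp.2]
  have gap := gap_lower hex φ hl he hub hlb g 1 p hp'
  rcases lt_trichotomy (φ (g*1)) (φ (g*p)) with h | h | h
  · left
    intro x y hxy
    exact (coherence hex φ hl he hub hlb hden g x y 1 p hxy hp').mpr h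
  · exfalso
    rw [h] at gap
    simp at gap
    linarith [mC_ge_one hl he]
  · right
    intro x y hxy
    have hiff := coherence hex φ hl he hub hlb hden g x y 1 p hxy hp'
    have hne : ¬ φ (g*x) < φ (g*y) := fun hcon => absurd (hiff.mp hcon) (by linarith)
    push_neg at hne
    rcases lt_or_eq_of_le hne with h2 | h2
    · exact h2
    · exfalso
      have gap2 := gap_lower hex φ hl he hub hlb g x y hxy
      rw [h2] at gap2
      simp at gap2
      linarith [mC_ge_one hl he]

theorem pres_one (hl : 1 ≤ l) (he : 0 ≤ e) : Pres φ l e 1 := by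
  intro x y hxy
  have := MC_ge_one hl he
  simpa using by linarith

theorem mul_pres (hl : 1 ≤ l) (he : 0 ≤ e)
    (hub : ∀ a b : G, |φ a - φ b| ≤ l * wordDist S a b + e)
    (hlb : ∀ a b : G, wordDist S a b ≤ l * (|φ a - φ b| + e))
    (hden : ∀ y : ℝ, ∃ a : G, |y - φ a| ≤ c)
    {g h : G} (hg : Pres φ l e g) (hh : Pres φ l e h) : Pres φ l e (g*h) := by
  obtain ⟨y₀, hy₀⟩ := hden (φ 1 + MB l e + c)
  have hy₀' : φ 1 + MB l e ≤ φ y₀ := by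
    rw [abs_le] at hy₀
    linarith [hy₀.2]
  have hy₀MC : φ 1 + MC l e ≤ φ y₀ := by linarith [MB_ge_MC hl he]
  have hsign := hh 1 y₀ hy₀MC
  have hgap := gap_lower_big hex φ hl he hub hlb h 1 y₀ hy₀'
  rw [abs_of_nonpos (by linarith)] at hgap
  have h1 : φ (h*1) + MC l e ≤ φ (h*y₀) := by linarith
  have h2 := hg (h*1) (h*y₀) h1
  rcases pres_or_rev hex φ hl he hub hlb hden (g*h) with hp | hr
  · exact hp
  · exfalso
    have h3 := hr 1 y₀ hy₀MC
    rw [mul_assoc, mul_assoc] at h3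
    linarith

theorem mul_rev_rev (hl : 1 ≤ l) (he : 0 ≤ e)
    (hub : ∀ a b : G, |φ a - φ b| ≤ l * wordDist S a b + e)
    (hlb : ∀ a b : G, wordDist S a b ≤ l * (|φ a - φ b| + e))
    (hden : ∀ y : ℝ, ∃ a : G, |y - φ a| ≤ c)
    {g h : G} (hg : Rev φ l e g) (hh : Rev φ l e h) : Pres φ l e (g*h) := by
  obtain ⟨y₀, hy₀⟩ := hden (φ 1 + MB l e + c)
  have hy₀' : φ 1 + MB l e ≤ φ y₀ := by
    rw [abs_le] at hy₀
    linarith [hy₀.2]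
  have hy₀MC : φ 1 + MC l e ≤ φ y₀ := by linarith [MB_ge_MC hl he]
  have hsign := hh 1 y₀ hy₀MC
  have hgap := gap_lower_big hex φ hl he hub hlb h 1 y₀ hy₀'
  rw [abs_of_nonneg (by linarith)] at hgap
  have h1 : φ (h*y₀) + MC l e ≤ φ (h*1) := by linarith
  have h2 := hg (h*y₀) (h*1) h1
  rcases pres_or_rev hex φ hl he hub hlb hden (g*h) with hp | hr
  · exact hp
  · exfalso
    have h3 := hr 1 y₀ hy₀MC
    rw [mul_assoc, mul_assoc] at h3
    linarith

theorem inv_pres (hl : 1 ≤ l) (he : 0 ≤ e)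
    (hub : ∀ a b : G, |φ a - φ b| ≤ l * wordDist S a b + e)
    (hlb : ∀ a b : G, wordDist S a b ≤ l * (|φ a - φ b| + e))
    (hden : ∀ y : ℝ, ∃ a : G, |y - φ a| ≤ c)
    {g : G} (hg : Pres φ l e g) : Pres φ l e g⁻¹ := by
  obtain ⟨y₀, hy₀⟩ := hden (φ 1 + MB l e + c)
  have hy₀' : φ 1 + MB l e ≤ φ y₀ := by
    rw [abs_le] at hy₀
    linarith [hy₀.2]
  have hy₀MC : φ 1 + MC l e ≤ φ y₀ := by linarith [MB_ge_MC hl he]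
  rcases pres_or_rev hex φ hl he hub hlb hden g⁻¹ with hp | hr
  · exact hp
  · exfalso
    have hsign := hr 1 y₀ hy₀MC
    have hgap := gap_lower_big hex φ hl he hub hlb g⁻¹ 1 y₀ hy₀'
    rw [abs_of_nonneg (by linarith)] at hgap
    have h1 : φ (g⁻¹*y₀) + MC l e ≤ φ (g⁻¹*1) := by linarith
    have h2 := hg (g⁻¹*y₀) (g⁻¹*1) h1
    rw [show g * (g⁻¹*y₀) = y₀ by group, show g * (g⁻¹*1) = 1 by group] at h2
    have := MB_ge_MC hl he
    have := MC_ge_one hl he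
    linarith

theorem inv_rev (hl : 1 ≤ l) (he : 0 ≤ e)
    (hub : ∀ a b : G, |φ a - φ b| ≤ l * wordDist S a b + e)
    (hlb : ∀ a b : G, wordDist S a b ≤ l * (|φ a - φ b| + e))
    (hden : ∀ y : ℝ, ∃ a : G, |y - φ a| ≤ c)
    {g : G} (hg : Rev φ l e g) : Rev φ l e g⁻¹ := by
  obtain ⟨y₀, hy₀⟩ := hden (φ 1 + MB l e + c)
  have hy₀' : φ 1 + MB l e ≤ φ y₀ := by
    rw [abs_le] at hy₀
    linarith [hy₀.2]
  have hy₀MC : φ 1 + MC l e ≤ φ y₀ := by linarith [MB_ge_MC hl he]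
  rcases pres_or_rev hex φ hl he hub hlb hden g⁻¹ with hp | hr
  · exfalso
    have hsign := hp 1 y₀ hy₀MC
    have hgap := gap_lower_big hex φ hl he hub hlb g⁻¹ 1 y₀ hy₀'
    rw [abs_of_nonpos (by linarith)] at hgap
    have h1 : φ (g⁻¹*1) + MC l e ≤ φ (g⁻¹*y₀) := by linarith
    have h2 := hg (g⁻¹*1) (g⁻¹*y₀) h1
    rw [show g * (g⁻¹*y₀) = y₀ by group, show g * (g⁻¹*1) = 1 by group] at h2
    have := MB_ge_MC hl he
    have := MC_ge_one hl he
    linarith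
  · exact hr

theorem zpow_pres (hl : 1 ≤ l) (he : 0 ≤ e)
    (hub : ∀ a b : G, |φ a - φ b| ≤ l * wordDist S a b + e)
    (hlb : ∀ a b : G, wordDist S a b ≤ l * (|φ a - φ b| + e))
    (hden : ∀ y : ℝ, ∃ a : G, |y - φ a| ≤ c)
    {g : G} (hg : Pres φ l e g) : ∀ n : ℤ, Pres φ l e (g^n) := by
  have hnat : ∀ n : ℕ, Pres φ l e (g^n) := by
    intro n
    induction n with
    | zero => simpa using pres_one hex φ hl he
    | succ n ih =>
        rw [pow_succ]
        exact mul_pres hex φ hl he hub hlb hden ih hg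
  intro n
  cases n with
  | ofNat n => simpa using hnat n
  | negSucc n =>
      rw [zpow_negSucc]
      exact inv_pres hex φ hl he hub hlb hden (hnat (n+1))

theorem choose_dir (hl : 1 ≤ l) (he : 0 ≤ e)
    (hub : ∀ a b : G, |φ a - φ b| ≤ l * wordDist S a b + e)
    (hlb : ∀ a b : G, wordDist S a b ≤ l * (|φ a - φ b| + e))
    (hden : ∀ y : ℝ, ∃ a : G, |y - φ a| ≤ c)
    {g₀ : G} (hg₀ : Pres φ l e g₀) (hgap : W0 l e ≤ |φ g₀ - φ 1|) :
    ∃ g : G, Pres φ l e g ∧ φ 1 + T0 l e ≤ φ g := by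
  have hl0 : (0:ℝ) < l := lt_of_lt_of_le one_pos hl
  have hMC1 := MC_ge_one (l := l) (e := e) hl he
  have hT0 := T0_ge_MC (l := l) (e := e) hl he
  have hW := W0_ge (l := l) (e := e) hl he
  rcases le_total (φ 1) (φ g₀) with h | h
  · refine ⟨g₀, hg₀, ?_⟩
    rw [abs_of_nonneg (by linarith)] at hgap
    linarith
  · refine ⟨g₀⁻¹, inv_pres hex φ hl he hub hlb hden hg₀, ?_⟩
    rw [abs_of_nonpos (by linarith)] at hgap
    have htrans := gap_transport hex φ hl he hub hlb g₀⁻¹ g₀ 1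
    rw [show g₀⁻¹ * g₀ = 1 by group, show g₀⁻¹ * 1 = g₀⁻¹ by group] at htrans
    have hkeyW : (W0 l e - e)/l^2 = T0 l e + MC l e + e := by
      unfold W0
      field_simp
      ring
    have hge : T0 l e + MC l e ≤ |φ 1 - φ g₀⁻¹| := by
      have h2 : (W0 l e - e)/l^2 ≤ (|φ g₀ - φ 1| - e)/l^2 := by
        gcongr
        linarith [abs_of_nonpos (show φ g₀ - φ 1 ≤ 0 by linarith)]
      linarith
    by_contra hcon
    push_neg at hcon
    rcases le_or_gt (φ g₀⁻¹) (φ 1) with hs | hs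
    · have hpair : φ g₀⁻¹ + MC l e ≤ φ 1 := by
        rw [abs_of_nonneg (by linarith)] at hge
        linarith
      have h2 := hg₀ g₀⁻¹ 1 hpair
      rw [show g₀ * g₀⁻¹ = 1 by group, mul_one] at h2
      linarith [W0_pos (l := l) (e := e) hl he]
    · rw [abs_of_nonpos (by linarith)] at hge
      linarith

end Main

end Stmt19

/-- Main Theorem: a finitely generated group whose Cayley graph
(with the word metric) is quasi-isometric to `ℝ` is virtually `ℤ`: it contains
an infinite cyclic subgroup of finite index. -/
theorem stmt_19 {G : Type*} [Group G] (S : Set G) (hS : S.Finite)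
    (hgen : Subgroup.closure S = ⊤)
    (l e : ℝ) (hl : 1 ≤ l) (he : 0 ≤ e) (φ : G → ℝ)
    (hφ : ∀ a b : G, (1 / l) * wordDist S a b - e ≤ dist (φ a) (φ b) ∧
      dist (φ a) (φ b) ≤ l * wordDist S a b + e)
    (hdense : ∃ c : ℝ, 0 ≤ c ∧ ∀ y : ℝ, ∃ a : G, dist y (φ a) ≤ c) :
    ∃ g : G, ¬ IsOfFinOrder g ∧ (Subgroup.zpowers g).index ≠ 0 := by
  classical
  open Stmt19 in
  obtain ⟨c, hc, hdense⟩ := hdense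
  have hex : ∀ g : G, ∃ k, g ∈ wordBall S k := Stmt19.exists_wordBall hgen
  have hl0 : (0:ℝ) < l := lt_of_lt_of_le one_pos hl
  have hub : ∀ a b : G, |φ a - φ b| ≤ l * wordDist S a b + e := by
    intro a b
    have := (hφ a b).2
    rwa [Real.dist_eq] at this
  have hlb : ∀ a b : G, wordDist S a b ≤ l * (|φ a - φ b| + e) := by
    intro a b
    have h := (hφ a b).1
    rw [Real.dist_eq] at h
    have h2 : (1/l) * wordDist S a b ≤ |φ a - φ b| + e := by linarith
    calc wordDist S a b = l * ((1/l) * wordDist S a b) := by field_simp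
      _ ≤ l * (|φ a - φ b| + e) := mul_le_mul_of_nonneg_left h2 hl0.le
  have hden : ∀ y : ℝ, ∃ a : G, |y - φ a| ≤ c := by
    intro y
    obtain ⟨a, ha⟩ := hdense y
    exact ⟨a, by rwa [Real.dist_eq] at ha⟩
  have hMC1 := Stmt19.MC_ge_one (l := l) (e := e) hl he
  have hT0MC := Stmt19.T0_ge_MC (l := l) (e := e) hl he
  have hW := Stmt19.W0_ge (l := l) (e := e) hl he
  set W := Stmt19.W0 l e with hWdef
  -- produce an order-preserving element far from the identity
  obtain ⟨u, hu⟩ := hden (φ 1 + (W + c + 1))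
  have hu1 : φ 1 + W + 1 ≤ φ u := by
    rw [abs_le] at hu
    linarith [hu.2]
  have hu2 : φ u ≤ φ 1 + W + 2*c + 1 := by
    rw [abs_le] at hu
    linarith [hu.1]
  obtain ⟨v, hv⟩ := hden (φ 1 + (l^2*(W+e)+e + (W + c + 1) + 3*c))
  have hv1 : φ 1 + l^2*(W+e) + e + W + 2*c + 1 ≤ φ v := by
    rw [abs_le] at hv
    linarith [hv.2]
  have hsqW : (0:ℝ) ≤ l^2*(W+e) := by
    have := Stmt19.W0_pos (l := l) (e := e) hl he
    positivity
  have huv : l^2*(W+e)+e ≤ φ v - φ u := by linarith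
  obtain ⟨g₀, hg₀p, hg₀gap⟩ : ∃ g₀ : G, Stmt19.Pres φ l e g₀ ∧ W ≤ |φ g₀ - φ 1| := by
    rcases Stmt19.pres_or_rev hex φ hl he hub hlb hden u with hPu | hRu
    · exact ⟨u, hPu, by rw [abs_of_nonneg (by linarith)]; linarith⟩
    · rcases Stmt19.pres_or_rev hex φ hl he hub hlb hden v with hPv | hRv
      · refine ⟨v, hPv, ?_⟩
        rw [abs_of_nonneg (by linarith)]
        linarith
      · refine ⟨u⁻¹ * v, Stmt19.mul_rev_rev hex φ hl he hub hlb hden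
          (Stmt19.inv_rev hex φ hl he hub hlb hden hRu) hRv, ?_⟩
        have htrans := Stmt19.gap_transport hex φ hl he hub hlb u⁻¹ u v
        rw [show u⁻¹ * u = 1 by group] at htrans
        have h1 : l^2*(W+e)+e ≤ |φ u - φ v| := by
          rw [abs_sub_comm, abs_of_nonneg (by linarith)]
          linarith
        have h2 : ((l^2*(W+e)+e) - e)/l^2 = W + e := by field_simp; ring
        have h3 : ((l^2*(W+e)+e) - e)/l^2 ≤ (|φ u - φ v| - e)/l^2 := by gcongr
        have h4 : W ≤ |φ 1 - φ (u⁻¹*v)| := by linarith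
        rw [abs_sub_comm] at h4
        exact h4
  obtain ⟨g, hgP, hgT⟩ := Stmt19.choose_dir hex φ hl he hub hlb hden hg₀p hg₀gap
  -- increments along powers of g
  set Γ : ℝ := l^2*((φ g - φ 1) + e) + e with hΓdef
  have hgT' : φ 1 + Stmt19.T0 l e ≤ φ g := hgT
  have hT01 := Stmt19.T0_ge_one (l := l) (e := e) hl he
  have hΓ0 : 0 ≤ Γ := by
    rw [hΓdef]
    have : (0:ℝ) ≤ φ g - φ 1 := by linarith
    positivity
  have hpairg : φ 1 + Stmt19.MC l e ≤ φ g := by linarith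
  have hincr_low : ∀ n : ℤ, φ (g^n) + 1 ≤ φ (g^(n+1)) := by
    intro n
    have hPn := Stmt19.zpow_pres hex φ hl he hub hlb hden hgP n
    have hsign := hPn 1 g hpairg
    have htrans := Stmt19.gap_transport hex φ hl he hub hlb (g^n) 1 g
    rw [mul_one] at hsign htrans
    have h1 : Stmt19.T0 l e ≤ |φ 1 - φ g| := by
      rw [abs_sub_comm, abs_of_nonneg (by linarith)]
      linarith
    have h2 : 1 + e ≤ (Stmt19.T0 l e - e)/l^2 := by
      rw [le_div_iff₀ (by positivity : (0:ℝ) < l^2)]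
      unfold Stmt19.T0
      nlinarith [hMC1]
    have h3 : (Stmt19.T0 l e - e)/l^2 ≤ (|φ 1 - φ g| - e)/l^2 := by gcongr
    have h4 : 1 ≤ |φ (g^n) - φ (g^n * g)| := by linarith
    rw [abs_of_nonpos (by linarith)] at h4
    rw [zpow_add_one]
    linarith
  have hincr_up : ∀ n : ℤ, φ (g^(n+1)) ≤ φ (g^n) + Γ := by
    intro n
    have htransu := Stmt19.gap_transport_up hex φ hl he hub hlb (g^n) 1 g
    rw [mul_one] at htransu
    have h1 : |φ 1 - φ g| = φ g - φ 1 := by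
      rw [abs_sub_comm]
      exact abs_of_nonneg (by linarith)
    rw [h1] at htransu
    have h2 := le_abs_self (φ (g^n * g) - φ (g^n))
    rw [abs_sub_comm] at h2
    rw [zpow_add_one]
    rw [hΓdef]
    linarith
  have hchain : ∀ (a : ℤ) (k : ℕ), φ (g^a) + (k:ℝ) ≤ φ (g^(a + (k:ℤ))) := by
    intro a k
    induction k with
    | zero => simp
    | succ k ih =>
        have h := hincr_low (a + (k:ℤ))
        have heq : (a + ((k:ℕ)+1 : ℤ)) = (a + (k:ℤ)) + 1 := by push_cast; ring
        rw [show ((k+1 : ℕ) : ℤ) = (k:ℤ)+1 by push_cast; ring, heq]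
        push_cast
        linarith
  -- infinite order
  have hio : ¬ IsOfFinOrder g := by
    intro hfin
    obtain ⟨n, hn0, hgn⟩ := isOfFinOrder_iff_pow_eq_one.mp hfin
    have h := hchain 0 n
    rw [zero_add, zpow_zero, zpow_natCast, hgn] at h
    have h1 : (1:ℝ) ≤ (n:ℝ) := by exact_mod_cast hn0
    linarith
  refine ⟨g, hio, ?_⟩
  -- covering
  have hcov : ∀ xv : ℝ, ∃ n : ℤ, |φ (g^n) - xv| ≤ Γ := by
    intro xv
    have hA : ∃ n : ℤ, xv ≤ φ (g^n) := by
      refine ⟨(⌈xv - φ 1⌉₊ : ℤ), ?_⟩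
      have h := hchain 0 ⌈xv - φ 1⌉₊
      rw [zero_add, zpow_zero] at h
      have h2 : xv - φ 1 ≤ (⌈xv - φ 1⌉₊ : ℝ) := Nat.le_ceil _
      linarith
    have hbdd : ∃ b : ℤ, ∀ z : ℤ, xv ≤ φ (g^z) → b ≤ z := by
      refine ⟨-(⌈φ 1 - xv⌉₊ : ℤ), ?_⟩
      intro z hz
      rcases le_or_gt 0 z with h0 | h0
      · have : (0:ℤ) ≤ (⌈φ 1 - xv⌉₊ : ℤ) := by positivity
        omega
      · have h := hchain z (-z).toNat
        rw [show z + ((-z).toNat : ℤ) = 0 by omega, zpow_zero] at h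
        have h2 : ((-z).toNat : ℝ) = -(z:ℝ) := by
          have : ((-z).toNat : ℤ) = -z := by omega
          exact_mod_cast congrArg (Int.cast : ℤ → ℝ) this
        rw [h2] at h
        have h3 : φ 1 - xv ≤ (⌈φ 1 - xv⌉₊ : ℝ) := Nat.le_ceil _
        have h4 : (z:ℝ) ≥ -(⌈φ 1 - xv⌉₊ : ℝ) := by linarith
        exact_mod_cast h4
    obtain ⟨n₀, hn₀, hmin⟩ := Int.exists_least_of_bdd hbdd hA
    refine ⟨n₀, ?_⟩
    have hless : φ (g^(n₀ - 1)) < xv := by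
      by_contra hcc
      push_neg at hcc
      have := hmin (n₀ - 1) hcc
      omega
    have hup := hincr_up (n₀ - 1)
    rw [show n₀ - 1 + 1 = n₀ by ring] at hup
    rw [abs_le]
    constructor <;> linarith
  -- finite index
  set K : ℕ := ⌈l*(Γ + e)⌉₊ with hKdef
  have hFfin : (wordBall S K).Finite := Stmt19.wordBall_finite hS K
  have key : ∀ x : G, ∃ f : G, f ∈ wordBall S K ∧ ∃ n : ℤ, f * x = g^(-n) := by
    intro x
    obtain ⟨n, hn⟩ := hcov (φ x⁻¹)
    have hdist : wordDist S (g^n) x⁻¹ ≤ (K:ℝ) := by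
      have h1 := hlb (g^n) x⁻¹
      have h2 : |φ (g^n) - φ x⁻¹| ≤ Γ := hn
      have h3 : l*(Γ + e) ≤ (K:ℝ) := Nat.le_ceil _
      nlinarith
    have hmem := Stmt19.mem_of_wordDist_le hex hdist
    refine ⟨(g^n)⁻¹ * x⁻¹, hmem, n, ?_⟩
    rw [zpow_neg]
    group
  haveI hfin : Finite (G ⧸ Subgroup.zpowers g) := by
    have hsub : Finite ↥(wordBall S K) := hFfin.to_subtype
    apply Finite.of_surjective
      (fun p : ↥(wordBall S K) => (QuotientGroup.mk (p.val)⁻¹ : G ⧸ Subgroup.zpowers g))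
    intro q
    obtain ⟨x, rfl⟩ := QuotientGroup.mk_surjective q
    obtain ⟨f, hfF, n, hfx⟩ := key x
    refine ⟨⟨f, hfF⟩, ?_⟩
    show QuotientGroup.mk f⁻¹ = QuotientGroup.mk x
    rw [QuotientGroup.eq]
    have : f⁻¹⁻¹ * x = f * x := by group
    rw [this, hfx]
    exact ⟨-n, rfl⟩
  exact Subgroup.index_ne_zero_of_finite
end
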